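/- Let C be a d-dimensional copula with continuous partial derivatives ∂_pC on {u : u_p ∈ (0,1)} for each p, and let C^#(s,u) = sC(u). Define Γ(H^#)(s,u) = H^#(s, H⁻(u)) with H = H^#(1,·). Then Γ is Hadamard-differentiable at C^# tangentially to D₀^# = {α^# ∈ C([0,1]^{d+1}) : α^#(0,·)=0 and α^#(s,·) ∈ D₀ for all s ∈ (0,1]}, with derivative Γ'_{C^#}(α^#)(s,u) = α^#(s,u) − s·Σ_{p=1}^d ∂_pC(u)·α^#(1,u^{(p)}). -/

import Mathlib

open MeasureTheory Set Filter

/-- A `d`-dimensional copula. -/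
def IsCopula (d : ℕ) (C : (Fin d → ℝ) → ℝ) : Prop :=
  ∃ μ : Measure (Fin d → ℝ), IsProbabilityMeasure μ ∧
    (∀ p : Fin d, ∀ t ∈ Icc (0:ℝ) 1, μ {x | x p ≤ t} = ENNReal.ofReal t) ∧
    (∀ u, C u = (μ {x | ∀ p, x p ≤ u p}).toReal)

/-- The unit cube `[0,1]^d`. -/
def cube (d : ℕ) : Set (Fin d → ℝ) := Set.univ.pi fun _ => Icc 0 1

/-- `x^{(p)}`: all coordinates `1` except the `p`-th, which is `x`. -/
def margVec {d : ℕ} (p : Fin d) (s : ℝ) : Fin d → ℝ := Function.update (fun _ => 1) p s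

/-!
Write `H_n = C + t_n α_n(1,·)` and `v_n(u) = (H_{n,p}⁻(u_p))_p`. Since `C` has uniform margins,
the `p`-th margin of `H_n` is `x ↦ x + t_n α_n(1, x^{(p)})`, and inverting a uniformly small
perturbation of the identity gives `(v_{n,p}(u) - u_p)/t_n → -α(1, u^{(p)})` uniformly
(Vervaat's lemma). Telescoping `C(v_n(u)) - C(u)` one coordinate at a time, the mean value
theorem for the uniformly continuous partial derivatives yields
`(C(v_n(u)) - C(u))/t_n → -∑_p ∂_pC(u) α(1, u^{(p)})`; near a face `u_p ∈ {0,1}`, where `∂_pC`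
need not be continuous, `α(1, u^{(p)})` is small instead, and `C` is `1`-Lipschitz in each
coordinate with `0 ≤ ∂_pC ≤ 1`. Finally `α_n(s, v_n(u)) → α(s, u)` by uniform continuity of `α`,
and `Γ(C^# + t_n α_n^#)(s,u) = s C(v_n(u)) + t_n α_n(s, v_n(u))`.
-/

open Topology

section Copula

variable {d : ℕ}

theorem measure_Iic_margVec (ν : Measure (Fin d → ℝ)) (h : ∀ᵐ y ∂ν, ∀ j, y j ≤ 1) (p : Fin d)
    (x : ℝ) : ν (Iic (margVec p x)) = ν {y | y p ≤ x} := by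
  refine measure_congr (eventuallyEq_set.2 ?_)
  filter_upwards [h] with y hy
  simp only [margVec, mem_Iic, le_update_iff]
  exact ⟨fun hle => hle.1, fun hle => ⟨hle, fun j _ => hy j⟩⟩

theorem measureReal_coord_le_eq_of_uniform {μ : Measure (Fin d → ℝ)} [IsProbabilityMeasure μ]
    (hm : ∀ p : Fin d, ∀ t ∈ Icc (0:ℝ) 1, μ {x | x p ≤ t} = ENNReal.ofReal t) (p : Fin d)
    (x : ℝ) : μ.real {y | y p ≤ x} = max 0 (min 1 x) := by
  have hid : ∀ t ∈ Icc (0:ℝ) 1, μ.real {y | y p ≤ t} = t := fun t ht => by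
    rw [measureReal_def, hm p t ht, ENNReal.toReal_ofReal ht.1]
  rcases le_total x 0 with hx0 | hx0
  · have hle : μ.real {y | y p ≤ x} ≤ μ.real {y | y p ≤ 0} :=
      measureReal_mono fun y hy => le_trans hy hx0
    rw [hid 0 (by simp)] at hle
    rw [max_eq_left (min_le_of_right_le hx0)]
    exact le_antisymm hle measureReal_nonneg
  rcases le_total x 1 with hx1 | hx1
  · rw [hid x ⟨hx0, hx1⟩, min_eq_right hx1, max_eq_right hx0]
  · have hge : μ.real {y | y p ≤ 1} ≤ μ.real {y | y p ≤ x} :=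
      measureReal_mono fun y hy => le_trans hy hx1
    rw [hid 1 (by simp)] at hge
    rw [min_eq_left hx1, max_eq_right zero_le_one]
    exact le_antisymm measureReal_le_one hge

namespace IsCopula

variable {C : (Fin d → ℝ) → ℝ}

theorem exists_measure (hC : IsCopula d C) :
    ∃ μ : Measure (Fin d → ℝ), IsProbabilityMeasure μ ∧
      (∀ p x, μ.real {y | y p ≤ x} = max 0 (min 1 x)) ∧ (∀ᵐ y ∂μ, ∀ j, y j ≤ 1) ∧
      ∀ u, C u = μ.real (Iic u) := by
  obtain ⟨μ, hμ, hm, hrep⟩ := hC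
  refine ⟨μ, hμ, measureReal_coord_le_eq_of_uniform hm, ae_all_iff.2 fun j => ?_, hrep⟩
  refine (ae_mem_iff_measure_eq (measurableSet_le (measurable_pi_apply j)
    measurable_const).nullMeasurableSet).2 ?_
  rw [hm j 1 (by simp), ENNReal.ofReal_one, measure_univ]

theorem apply_margVec (hC : IsCopula d C) (p : Fin d) {x : ℝ} (hx : x ∈ Icc (0:ℝ) 1) :
    C (margVec p x) = x := by
  obtain ⟨μ, -, hm, hle, hrep⟩ := hC.exists_measure
  rw [hrep, measureReal_def, measure_Iic_margVec μ hle, ← measureReal_def, hm,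
    min_eq_right hx.2, max_eq_right hx.1]

theorem monotone (hC : IsCopula d C) : Monotone C := by
  obtain ⟨μ, _, -, -, hrep⟩ := hC.exists_measure
  intro a b hab
  rw [hrep, hrep]
  exact measureReal_mono (Iic_subset_Iic.2 hab)

theorem update_sub_update_le (hC : IsCopula d C) (u : Fin d → ℝ) (p : Fin d) {a b : ℝ}
    (hab : a ≤ b) : C (Function.update u p b) - C (Function.update u p a) ≤ b - a := by
  obtain ⟨μ, _, hm, -, hrep⟩ := hC.exists_measure
  have hslab : Iic (Function.update u p b) \ Iic (Function.update u p a) ⊆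
      {y | y p ≤ b} \ {y | y p ≤ a} := by
    rintro y ⟨hyb, hya⟩
    rw [mem_Iic, le_update_iff] at hyb hya
    exact ⟨hyb.1, fun hyp => hya ⟨hyp, hyb.2⟩⟩
  calc C (Function.update u p b) - C (Function.update u p a)
      = μ.real (Iic (Function.update u p b) \ Iic (Function.update u p a)) := by
        rw [hrep, hrep, measureReal_sdiff (Iic_subset_Iic.2 (Function.update_mono hab))
          measurableSet_Iic]
    _ ≤ μ.real ({y : Fin d → ℝ | y p ≤ b} \ {y | y p ≤ a}) := measureReal_mono hslab
    _ = max 0 (min 1 b) - max 0 (min 1 a) := by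
        have hsub : {y : Fin d → ℝ | y p ≤ a} ⊆ {y | y p ≤ b} := fun y hy => le_trans hy hab
        rw [measureReal_sdiff hsub (measurableSet_le (measurable_pi_apply p) measurable_const),
          hm, hm]
    _ ≤ b - a := by
        rcases le_total a 0 with ha | ha <;> rcases le_total a 1 with ha' | ha' <;>
          rcases le_total b 0 with hb | hb <;> rcases le_total b 1 with hb' | hb' <;>
          simp [*] <;> linarith

theorem abs_update_sub_update_le (hC : IsCopula d C) (u : Fin d → ℝ) (p : Fin d) (a b : ℝ) :
    |C (Function.update u p a) - C (Function.update u p b)| ≤ |a - b| := by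
  rcases le_total a b with hab | hab
  · rw [abs_sub_comm, abs_of_nonneg (sub_nonneg.2 (hC.monotone (Function.update_mono hab))),
      abs_sub_comm, abs_of_nonneg (sub_nonneg.2 hab)]
    exact hC.update_sub_update_le u p hab
  · rw [abs_of_nonneg (sub_nonneg.2 (hC.monotone (Function.update_mono hab))),
      abs_of_nonneg (sub_nonneg.2 hab)]
    exact hC.update_sub_update_le u p hab

theorem hasDerivWithinAt_mem_Icc (hC : IsCopula d C) {u : Fin d → ℝ} {p : Fin d} {D : ℝ}
    (hu : u p ∈ Ioo (0:ℝ) 1)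
    (hD : HasDerivWithinAt (fun s => C (Function.update u p s)) D (Icc (0:ℝ) 1) (u p)) :
    D ∈ Icc (0:ℝ) 1 := by
  have hD' : HasDerivAt (fun s => C (Function.update u p s)) D (u p) :=
    hD.hasDerivAt (Icc_mem_nhds hu.1 hu.2)
  refine ⟨hD'.nonneg_of_monotone fun a b hab => hC.monotone (Function.update_mono hab), ?_⟩
  have hmono : Monotone fun s => s - C (Function.update u p s) := fun a b hab => by
    linarith [hC.update_sub_update_le u p hab]
  linarith [((hasDerivAt_id (u p)).sub hD').nonneg_of_monotone hmono]

end IsCopula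

end Copula

section Cube

variable {d : ℕ}

theorem update_mem_cube {w : Fin d → ℝ} (hw : w ∈ cube d) (k : Fin d) {x : ℝ}
    (hx : x ∈ Icc (0:ℝ) 1) : Function.update w k x ∈ cube d := by
  intro i _
  rcases eq_or_ne i k with rfl | hi
  · simpa using hx
  · simpa [Function.update_of_ne hi] using hw i (mem_univ i)

theorem margVec_mem_cube (p : Fin d) {x : ℝ} (hx : x ∈ Icc (0:ℝ) 1) : margVec p x ∈ cube d :=
  update_mem_cube (fun _ _ => right_mem_Icc.2 zero_le_one) p hx

theorem apply_margVec_zero_one_of_measure {H : (Fin d → ℝ) → ℝ}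
    (hH : ∃ ν : Measure (Fin d → ℝ), IsProbabilityMeasure ν ∧
      (∀ p : Fin d, ν {x | x p ≤ 0} = 0 ∧ ν {x | 1 < x p} = 0) ∧
      (∀ u ∈ cube d, H u = (ν {x | ∀ p, x p ≤ u p}).toReal)) (p : Fin d) :
    H (margVec p 0) = 0 ∧ H (margVec p 1) = 1 := by
  obtain ⟨ν, _, hnull, hrep⟩ := hH
  have hle : ∀ᵐ y ∂ν, ∀ j, y j ≤ 1 := ae_all_iff.2 fun j =>
    (measure_eq_zero_iff_ae_notMem.1 (hnull j).2).mono fun y hy => not_lt.1 hy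
  have hmarg : ∀ x ∈ Icc (0:ℝ) 1, H (margVec p x) = (ν {y | y p ≤ x}).toReal := fun x hx => by
    rw [hrep _ (margVec_mem_cube p hx), ← measure_Iic_margVec ν hle]
    rfl
  refine ⟨by rw [hmarg 0 (left_mem_Icc.2 zero_le_one), (hnull p).1, ENNReal.toReal_zero], ?_⟩
  rw [hmarg 1 (right_mem_Icc.2 zero_le_one), (ae_mem_iff_measure_eq (measurableSet_le
    (measurable_pi_apply p) measurable_const).nullMeasurableSet).1 (hle.mono fun y hy => hy p),
    measure_univ, ENNReal.toReal_one]

theorem exists_abs_update_sub_sub_mul_le {C D : (Fin d → ℝ) → ℝ} {k : Fin d}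
    (hDderiv : ∀ u ∈ cube d, u k ∈ Ioo (0:ℝ) 1 →
      HasDerivWithinAt (fun s => C (Function.update u k s)) (D u) (Icc (0:ℝ) 1) (u k))
    (hDcont : ContinuousOn D {u | u ∈ cube d ∧ u k ∈ Ioo (0:ℝ) 1}) {ε δ : ℝ} (hε : 0 < ε)
    (hδ : 0 < δ) :
    ∃ ρ > 0, ∀ u ∈ cube d, u k ∈ Icc δ (1 - δ) → ∀ w ∈ cube d, (∀ i, |w i - u i| ≤ ρ) →
      ∀ b, |b - u k| ≤ ρ →
        |C (Function.update w k b) - C (Function.update w k (u k)) - (b - u k) * D u| ≤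
          ε * |b - u k| := by
  set K := {x | x ∈ cube d ∧ x k ∈ Icc (δ / 2) (1 - δ / 2)}
  have hKsub : K ⊆ {u | u ∈ cube d ∧ u k ∈ Ioo (0:ℝ) 1} := fun x hx =>
    ⟨hx.1, by linarith [hx.2.1], by linarith [hx.2.2]⟩
  have hK : IsCompact K :=
    ((isCompact_univ_pi fun _ => isCompact_Icc).inter_right
      (isClosed_Icc.preimage (continuous_apply k)))
  obtain ⟨ρ₀, hρ₀, hDρ₀⟩ := Metric.uniformContinuousOn_iff_le.1
    (hK.uniformContinuousOn_of_continuous (hDcont.mono hKsub)) ε hε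
  refine ⟨min ρ₀ (δ / 2), lt_min hρ₀ (by positivity), fun u hu huk w hw hwu b hb => ?_⟩
  have hseg : uIcc (u k) b ⊆ Icc (δ / 2) (1 - δ / 2) :=
    uIcc_subset_Icc ⟨by linarith [huk.1], by linarith [huk.2]⟩ (by
      have := (abs_le.1 (hb.trans (min_le_right _ _)))
      exact ⟨by linarith [huk.1], by linarith [huk.2]⟩)
  have hmemK : ∀ x ∈ uIcc (u k) b, Function.update w k x ∈ K := fun x hx =>
    ⟨update_mem_cube hw k ⟨by linarith [(hseg hx).1], by linarith [(hseg hx).2]⟩,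
      by simpa using hseg hx⟩
  have hderiv : ∀ x ∈ uIcc (u k) b, HasDerivWithinAt
      (fun y => C (Function.update w k y) - y * D u) (D (Function.update w k x) - D u)
      (uIcc (u k) b) x := fun x hx => by
    have h := hDderiv _ (hmemK x hx).1 (by simpa using hKsub (hmemK x hx) |>.2)
    simp only [Function.update_idem, Function.update_self] at h
    exact (h.mono (hseg.trans (Icc_subset_Icc (by linarith) (by linarith)))).sub
      ((hasDerivWithinAt_id x _).mul_const (D u) |>.congr_deriv (one_mul _))
  have hbound : ∀ x ∈ uIcc (u k) b, ‖D (Function.update w k x) - D u‖ ≤ ε := fun x hx => by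
    rw [← dist_eq_norm]
    refine hDρ₀ _ (hmemK x hx) u ⟨hu, Icc_subset_Icc (by linarith) (by linarith) huk⟩ ?_
    refine (dist_pi_le_iff hρ₀.le).2 fun i => ?_
    rw [Real.dist_eq]
    rcases eq_or_ne i k with rfl | hi
    · simpa using (abs_sub_left_of_mem_uIcc hx).trans (hb.trans (min_le_left _ _))
    · simpa [Function.update_of_ne hi] using (hwu i).trans (min_le_left _ _)
  have := (convex_uIcc (u k) b).norm_image_sub_le_of_norm_hasDerivWithin_le hderiv hbound
    left_mem_uIcc right_mem_uIcc
  simp only [Real.norm_eq_abs] at this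
  convert this using 2
  ring

theorem sub_eq_sum_update_sub {β G : Type*} [AddCommGroup G] (F : (Fin d → β) → G)
    (u v : Fin d → β) :
    F v - F u = ∑ k : Fin d,
      (F (Function.update (fun i => if i < k then v i else u i) k (v k)) -
        F (Function.update (fun i => if i < k then v i else u i) k (u k))) := by
  set W : ℕ → G := fun m => F fun i : Fin d => if (i : ℕ) < m then v i else u i
  have hsucc : ∀ k : Fin d,
      Function.update (fun i => if i < k then v i else u i) k (v k) =
        fun i : Fin d => if (i : ℕ) < k + 1 then v i else u i := fun k => by
    ext i
    rcases eq_or_ne i k with rfl | hi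
    · simp
    · have hik : (i : ℕ) < k + 1 ↔ i < k := by
        rw [Fin.lt_def]; have := Fin.val_ne_of_ne hi; omega
      simp [Function.update_of_ne hi, hik]
  have hself : ∀ k : Fin d,
      Function.update (fun i => if i < k then v i else u i) k (u k) =
        fun i : Fin d => if (i : ℕ) < k then v i else u i := fun k => by
    ext i
    rcases eq_or_ne i k with rfl | hi
    · simp
    · simp [Function.update_of_ne hi]
  simp only [hsucc, hself]
  rw [Fin.sum_univ_eq_sum_range (fun m => W (m + 1) - W m), Finset.sum_range_sub]
  simp [W]

end Cube

section GeneralizedInverse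

/-- The generalized inverse `G⁻` of a distribution function `G` on `[0,1]`. -/
noncomputable def genInv (G : ℝ → ℝ) (q : ℝ) : ℝ :=
  if q = 0 then sSup {x ∈ Icc (0:ℝ) 1 | G x = 0} else sInf {x ∈ Icc (0:ℝ) 1 | q ≤ G x}

theorem eqOn_genInv {F G : ℝ → ℝ} (hpos : ∀ q ∈ Ioc (0:ℝ) 1, F q = sInf {x ∈ Icc (0:ℝ) 1 | q ≤ G x})
    (hzero : F 0 = sSup {x ∈ Icc (0:ℝ) 1 | G x = 0}) : EqOn F (genInv G) (Icc 0 1) := by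
  intro q hq
  unfold genInv
  split_ifs with h
  · rw [h, hzero]
  · exact hpos q ⟨lt_of_le_of_ne hq.1 (Ne.symm h), hq.2⟩

variable {G : ℝ → ℝ} {q c κ δ : ℝ}

theorem genInv_mem_Icc (hG0 : G 0 = 0) (hG1 : G 1 = 1) (hq : q ∈ Icc (0:ℝ) 1) :
    genInv G q ∈ Icc (0:ℝ) 1 := by
  unfold genInv
  split_ifs with h
  · have h0 : (0:ℝ) ∈ {x ∈ Icc (0:ℝ) 1 | G x = 0} := ⟨left_mem_Icc.2 zero_le_one, hG0⟩
    exact ⟨le_csSup ⟨1, fun x hx => hx.1.2⟩ h0, csSup_le ⟨0, h0⟩ fun x hx => hx.1.2⟩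
  · have h1 : (1:ℝ) ∈ {x ∈ Icc (0:ℝ) 1 | q ≤ G x} :=
      ⟨right_mem_Icc.2 zero_le_one, by rw [hG1]; exact hq.2⟩
    exact ⟨le_csInf ⟨1, h1⟩ fun x hx => hx.1.1, csInf_le ⟨0, fun x hx => hx.1.1⟩ h1⟩

theorem abs_sSup_zeros_add_le (hG0 : G 0 = 0)
    (hGδ : ∀ x ∈ Icc (0:ℝ) 1, |G x - x| ≤ δ / 2)
    (hGc : ∀ x ∈ Icc (0:ℝ) 1, |x| ≤ δ → |G x - x - c| ≤ κ) :
    |sSup {x ∈ Icc (0:ℝ) 1 | G x = 0} + c| ≤ κ := by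
  have h0 : (0:ℝ) ∈ {x ∈ Icc (0:ℝ) 1 | G x = 0} := ⟨left_mem_Icc.2 zero_le_one, hG0⟩
  have hδ : 0 ≤ δ := by linarith [abs_nonneg (G 0 - 0), hGδ 0 h0.1]
  have hc : |c| ≤ κ := by simpa [hG0] using hGc 0 h0.1 (by simpa using hδ)
  have hzero : ∀ x ∈ {x ∈ Icc (0:ℝ) 1 | G x = 0}, x ≤ κ - c := fun x ⟨hx, hGx⟩ => by
    have hxδ : |x| ≤ δ := by
      have := hGδ x hx
      rw [hGx, zero_sub, abs_neg] at this
      linarith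
    have := (abs_le.1 (hGc x hx hxδ)).1
    linarith
  have hlow := le_csSup ⟨1, fun x hx => hx.1.2⟩ h0
  have hhigh := csSup_le ⟨0, h0⟩ hzero
  exact abs_le.2 ⟨by linarith [(abs_le.1 hc).1], by linarith⟩

theorem abs_sInf_sub_le {E : ℝ} (hq : q ∈ Ioc (0:ℝ) 1) (hG1 : G 1 = 1)
    (hGE : ∀ x ∈ Icc (0:ℝ) 1, |G x - x| ≤ E) :
    |sInf {x ∈ Icc (0:ℝ) 1 | q ≤ G x} - q| ≤ E := by
  have h1 : (1:ℝ) ∈ {x ∈ Icc (0:ℝ) 1 | q ≤ G x} :=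
    ⟨right_mem_Icc.2 zero_le_one, by rw [hG1]; exact hq.2⟩
  have hbdd : BddBelow {x ∈ Icc (0:ℝ) 1 | q ≤ G x} := ⟨0, fun x hx => hx.1.1⟩
  have hlow : q - E ≤ sInf {x ∈ Icc (0:ℝ) 1 | q ≤ G x} := le_csInf ⟨1, h1⟩ fun x hx => by
    linarith [hx.2, (abs_le.1 (hGE x hx.1)).2]
  have hhigh : sInf {x ∈ Icc (0:ℝ) 1 | q ≤ G x} ≤ q + E := by
    rcases le_or_gt (q + E) 1 with h | h
    · have hx : q + E ∈ Icc (0:ℝ) 1 := ⟨by linarith [hq.1, abs_nonneg (G 1 - 1), hGE 1 h1.1], h⟩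
      exact csInf_le hbdd ⟨hx, by linarith [(abs_le.1 (hGE _ hx)).1]⟩
    · linarith [csInf_le hbdd h1]
  exact abs_le.2 ⟨by linarith, by linarith⟩

theorem abs_sInf_sub_add_le (hq : q ∈ Ioc (0:ℝ) 1) (hG0 : G 0 = 0) (hG1 : G 1 = 1)
    (hGδ : ∀ x ∈ Icc (0:ℝ) 1, |G x - x| ≤ δ / 2)
    (hGc : ∀ x ∈ Icc (0:ℝ) 1, |x - q| ≤ δ → |G x - x - c| ≤ κ) :
    |sInf {x ∈ Icc (0:ℝ) 1 | q ≤ G x} - q + c| ≤ κ := by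
  set S := {x ∈ Icc (0:ℝ) 1 | q ≤ G x}
  have hqI : q ∈ Icc (0:ℝ) 1 := Ioc_subset_Icc_self hq
  have h1 : (1:ℝ) ∈ S := ⟨right_mem_Icc.2 zero_le_one, by rw [hG1]; exact hq.2⟩
  have hbdd : BddBelow S := ⟨0, fun x hx => hx.1.1⟩
  have hv := abs_le.1 (abs_sInf_sub_le hq hG1 hGδ)
  have hδ : 0 ≤ δ := by linarith [abs_nonneg (G 0 - 0), hGδ 0 (left_mem_Icc.2 zero_le_one)]
  have hc : |c| ≤ κ + δ / 2 := by
    have h := hGc q hqI (by simpa using hδ)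
    rw [abs_le] at h ⊢
    constructor <;> linarith [abs_le.1 (hGδ q hqI)]
  have hlower : q - c - κ ≤ sInf S := le_csInf ⟨1, h1⟩ fun x hx => by
    rcases le_or_gt |x - q| δ with hxq | hxq
    · linarith [hx.2, (abs_le.1 (hGc x hx.1 hxq)).2]
    · have := csInf_le hbdd hx
      rcases lt_abs.1 hxq with h | h <;> linarith [(abs_le.1 hc).1]
  have hupper : sInf S ≤ q - c + κ := by
    by_contra! hlt
    rcases (le_csInf ⟨1, h1⟩ fun x hx => hx.1.1 : 0 ≤ sInf S).eq_or_lt with hv0 | hv0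
    · have h0 := hGc 0 (left_mem_Icc.2 zero_le_one) (by
        rw [zero_sub, abs_neg, abs_of_pos hq.1]; linarith)
      simp only [hG0, sub_zero, zero_sub, abs_neg] at h0
      linarith [(abs_le.1 h0).2, hq.1]
    obtain ⟨x, hwx, hxv⟩ := exists_between (max_lt hlt hv0)
    have hxI : x ∈ Icc (0:ℝ) 1 := ⟨(le_max_right _ _).trans hwx.le, by linarith [csInf_le hbdd h1]⟩
    have hGx : G x < q := by
      by_contra! h
      exact notMem_of_lt_csInf hxv hbdd ⟨hxI, h⟩
    have hw := (le_max_left _ _).trans_lt hwx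
    have hxq : |x - q| ≤ δ := abs_le.2 ⟨by linarith [(abs_le.1 hc).2], by linarith⟩
    linarith [(abs_le.1 (hGc x hxI hxq)).1]
  exact abs_le.2 ⟨by linarith, by linarith⟩

theorem abs_genInv_sub_add_le (hq : q ∈ Icc (0:ℝ) 1) (hG0 : G 0 = 0) (hG1 : G 1 = 1)
    (hGδ : ∀ x ∈ Icc (0:ℝ) 1, |G x - x| ≤ δ / 2)
    (hGc : ∀ x ∈ Icc (0:ℝ) 1, |x - q| ≤ δ → |G x - x - c| ≤ κ) :
    |genInv G q - q + c| ≤ κ := by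
  unfold genInv
  split_ifs with h
  · subst h
    simpa using abs_sSup_zeros_add_le hG0 hGδ (by simpa using hGc)
  · exact abs_sInf_sub_add_le ⟨lt_of_le_of_ne hq.1 (Ne.symm h), hq.2⟩ hG0 hG1 hGδ hGc

end GeneralizedInverse

theorem tendstoUniformlyOn_genInv_sub_div {ι : Type*} {l : Filter ι} {G : ι → ℝ → ℝ}
    {t : ι → ℝ} {β : ℝ → ℝ} (ht0 : ∀ n, t n ≠ 0) (htt : Tendsto t l (𝓝 0))
    (hG0 : ∀ n, G n 0 = 0) (hG1 : ∀ n, G n 1 = 1) (hβ : ContinuousOn β (Icc 0 1))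
    (hGβ : TendstoUniformlyOn (fun n x => (G n x - x) / t n) β l (Icc 0 1)) :
    TendstoUniformlyOn (fun n q => (genInv (G n) q - q) / t n) (fun q => -β q) l
      (Icc 0 1) := by
  obtain ⟨M, hM⟩ := isCompact_Icc.exists_bound_of_continuousOn hβ
  rw [Metric.tendstoUniformlyOn_iff]
  intro ε hε
  obtain ⟨δ, hδ, hβδ⟩ := Metric.uniformContinuousOn_iff_le.1
    (isCompact_Icc.uniformContinuousOn_of_continuous hβ) (ε / 4) (by positivity)
  have hsmall : ∀ᶠ n in l, |t n| * (M + ε / 4) ≤ δ / 2 := by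
    have : Tendsto (fun n => |t n| * (M + ε / 4)) l (𝓝 0) := by
      simpa using (htt.abs.mul_const (M + ε / 4))
    exact (this.eventually (ge_mem_nhds (by positivity)))
  filter_upwards [Metric.tendstoUniformlyOn_iff.1 hGβ (ε / 4) (by positivity), hsmall]
    with n hn htn q hq
  have htpos : 0 < |t n| := abs_pos.2 (ht0 n)
  have hGx : ∀ x ∈ Icc (0:ℝ) 1, |G n x - x - t n * β x| ≤ |t n| * (ε / 4) := fun x hx => by
    have := (hn x hx).le
    rwa [Real.dist_eq, abs_sub_comm, ← mul_le_mul_iff_of_pos_left htpos, ← abs_mul, mul_sub,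
      mul_div_cancel₀ _ (ht0 n)] at this
  have hkey : |genInv (G n) q - q + t n * β q| ≤ |t n| * (ε / 2) := by
    refine abs_genInv_sub_add_le (δ := δ) hq (hG0 n) (hG1 n) (fun x hx => ?_) (fun x hx hxq => ?_)
    · calc |G n x - x| ≤ |G n x - x - t n * β x| + |t n| * |β x| := by
            rw [← abs_mul]; simpa using abs_sub_le (G n x - x) (t n * β x) 0
        _ ≤ |t n| * (ε / 4) + |t n| * M := by
            gcongr
            · exact hGx x hx
            · simpa using hM x hx
        _ ≤ δ / 2 := by linarith
    · have hβq : |β x - β q| ≤ ε / 4 := by simpa [Real.dist_eq] using hβδ x hx q hq (by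
        rwa [Real.dist_eq])
      calc |G n x - x - t n * β q| ≤ |G n x - x - t n * β x| + |t n| * |β x - β q| := by
            rw [← abs_mul, mul_sub]; exact abs_sub_le _ _ _
        _ ≤ |t n| * (ε / 4) + |t n| * (ε / 4) := by gcongr; exact hGx x hx
        _ = |t n| * (ε / 2) := by ring
  rw [Real.dist_eq, neg_sub_left, abs_neg, ← mul_lt_mul_iff_of_pos_left htpos, ← abs_mul,
    mul_add, mul_div_cancel₀ _ (ht0 n)]
  calc |genInv (G n) q - q + t n * β q| ≤ |t n| * (ε / 2) := by
        simpa [add_comm] using hkey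
    _ < |t n| * ε := by gcongr; linarith

section UniformConvergence

variable {ι α : Type*} {l : Filter ι}

theorem TendstoUniformlyOn.of_sub_div {f : ι → α → ℝ} {h g : α → ℝ} {s : Set α} {t : ι → ℝ}
    {M : ℝ} (hfg : TendstoUniformlyOn (fun n x => (f n x - h x) / t n) g l s)
    (hg : ∀ x ∈ s, |g x| ≤ M) (ht0 : ∀ n, t n ≠ 0) (htt : Tendsto t l (𝓝 0)) :
    TendstoUniformlyOn f h l s := by
  rw [Metric.tendstoUniformlyOn_iff] at hfg ⊢
  intro ε hε
  have hsmall : ∀ᶠ n in l, |t n| * (M + 1) < ε := by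
    have : Tendsto (fun n => |t n| * (M + 1)) l (𝓝 0) := by
      simpa using htt.abs.mul_const (M + 1)
    exact this.eventually (gt_mem_nhds hε)
  filter_upwards [hfg 1 one_pos, hsmall] with n hn htn x hx
  have hdiv : |(f n x - h x) / t n| ≤ M + 1 := by
    have := (hn x hx).le
    rw [Real.dist_eq, abs_sub_comm] at this
    linarith [abs_sub_abs_le_abs_sub ((f n x - h x) / t n) (g x), hg x hx]
  rw [abs_div, div_le_iff₀ (abs_pos.2 (ht0 n))] at hdiv
  rw [Real.dist_eq, abs_sub_comm]
  linarith

theorem TendstoUniformlyOn.comp_of_uniformContinuousOn {β : Type*} [PseudoMetricSpace α]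
    {F : ι → α → ℝ} {f : α → ℝ} {K : Set α} {φ : ι → β → α} {ψ : β → α} {T : Set β}
    (hF : TendstoUniformlyOn F f l K) (hf : UniformContinuousOn f K)
    (hφ : TendstoUniformlyOn φ ψ l T) (hφK : ∀ n, ∀ x ∈ T, φ n x ∈ K)
    (hψK : ∀ x ∈ T, ψ x ∈ K) :
    TendstoUniformlyOn (fun n x => F n (φ n x)) (fun x => f (ψ x)) l T := by
  rw [Metric.tendstoUniformlyOn_iff] at hF hφ ⊢
  intro ε hε
  obtain ⟨δ, hδ, hfδ⟩ := Metric.uniformContinuousOn_iff.1 hf (ε / 2) (by positivity)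
  filter_upwards [hF (ε / 2) (by positivity), hφ δ hδ] with n hFn hφn x hx
  calc dist (f (ψ x)) (F n (φ n x))
      ≤ dist (f (ψ x)) (f (φ n x)) + dist (f (φ n x)) (F n (φ n x)) := dist_triangle _ _ _
    _ < ε / 2 + ε / 2 :=
        add_lt_add (hfδ _ (hψK x hx) _ (hφK n x hx) (hφn x hx)) (hFn _ (hφK n x hx))
    _ = ε := add_halves ε

theorem TendstoUniformlyOn.mul_left_of_abs_le {F : ι → α → ℝ} {f c : α → ℝ} {s : Set α}
    {M : ℝ} (h : TendstoUniformlyOn F f l s) (hc : ∀ x ∈ s, |c x| ≤ M) :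
    TendstoUniformlyOn (fun n x => c x * F n x) (fun x => c x * f x) l s := by
  rw [Metric.tendstoUniformlyOn_iff] at h ⊢
  intro ε hε
  have hM : 0 < |M| + 1 := by positivity
  filter_upwards [h (ε / (|M| + 1)) (by positivity)] with n hn x hx
  rw [Real.dist_eq, ← mul_sub, abs_mul, ← Real.dist_eq]
  calc |c x| * dist (f x) (F n x) ≤ (|M| + 1) * dist (f x) (F n x) := by
        gcongr; linarith [hc x hx, le_abs_self M]
    _ < (|M| + 1) * (ε / (|M| + 1)) := by gcongr; exact hn x hx
    _ = ε := mul_div_cancel₀ ε hM.ne'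

theorem tendstoUniformlyOn_prodMk_pi {X κ : Type*} [PseudoMetricSpace X] [Fintype κ]
    {S : Set X} {K : Set (κ → ℝ)} {v : ι → (κ → ℝ) → κ → ℝ}
    (hv : ∀ i, TendstoUniformlyOn (fun n u => v n u i) (fun u => u i) l K) :
    TendstoUniformlyOn (fun n (q : X × (κ → ℝ)) => (q.1, v n q.2)) id l (S ×ˢ K) := by
  rw [Metric.tendstoUniformlyOn_iff]
  intro ε hε
  filter_upwards [eventually_all.2 fun i => Metric.tendstoUniformlyOn_iff.1 (hv i) ε hε]
    with n hn q hq
  simpa [Prod.dist_eq, hε, dist_pi_lt_iff hε] using fun i => hn i _ hq.2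

theorem tendsto_iSup_abs_sub_of_tendstoUniformlyOn {s : Set α} (hs : s.Nonempty)
    {F : ι → α → ℝ} {f : α → ℝ} (h : TendstoUniformlyOn F f l s) :
    Tendsto (fun n => ⨆ x : s, |F n x - f x|) l (𝓝 0) := by
  have := hs.to_subtype
  rw [Metric.tendstoUniformlyOn_iff] at h
  rw [Metric.tendsto_nhds]
  intro ε hε
  filter_upwards [h (ε / 2) (by positivity)] with n hn
  have hsup : ⨆ x : s, |F n x - f x| ≤ ε / 2 := ciSup_le fun x => by
    simpa [Real.dist_eq, abs_sub_comm] using (hn x x.2).le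
  rw [Real.dist_eq, sub_zero, abs_of_nonneg (Real.iSup_nonneg fun _ => abs_nonneg _)]
  linarith

end UniformConvergence

theorem exists_abs_le_of_near_endpoints {g : ℝ → ℝ} (hg : ContinuousOn g (Icc 0 1))
    (hg0 : g 0 = 0) (hg1 : g 1 = 0) {ε : ℝ} (hε : 0 < ε) :
    ∃ δ > 0, ∀ x ∈ Icc (0:ℝ) 1, x ∉ Icc δ (1 - δ) → |g x| ≤ ε := by
  obtain ⟨δ, hδ, hgδ⟩ := Metric.uniformContinuousOn_iff_le.1
    (isCompact_Icc.uniformContinuousOn_of_continuous hg) ε hε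
  refine ⟨δ, hδ, fun x hx hxδ => ?_⟩
  rcases not_and_or.1 hxδ with h | h <;> push Not at h
  · simpa [hg0, Real.dist_eq] using hgδ x hx 0 (left_mem_Icc.2 zero_le_one) (by
      rw [Real.dist_eq, sub_zero, abs_of_nonneg hx.1]; linarith)
  · simpa [hg1, Real.dist_eq] using hgδ x hx 1 (right_mem_Icc.2 zero_le_one) (by
      rw [Real.dist_eq, abs_of_nonpos (by linarith [hx.2])]; linarith)

theorem abs_sum_div_sub_sum_le {ι : Type*} (s : Finset ι) {a c : ι → ℝ} {t ε : ℝ} (ht : t ≠ 0)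
    (h : ∀ k ∈ s, |a k - t * c k| ≤ |t| * ε) :
    |(∑ k ∈ s, a k) / t - ∑ k ∈ s, c k| ≤ s.card * ε := by
  have htpos : 0 < |t| := abs_pos.2 ht
  rw [← mul_le_mul_iff_of_pos_left htpos, ← abs_mul, mul_sub, mul_div_cancel₀ _ ht,
    Finset.mul_sum, ← Finset.sum_sub_distrib]
  calc _ ≤ ∑ k ∈ s, |t| * ε := (Finset.abs_sum_le_sum_abs _ _).trans (Finset.sum_le_sum h)
    _ = |t| * (s.card * ε) := by rw [Finset.sum_const, nsmul_eq_mul]; ring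

namespace IsCopula

variable {d : ℕ} {C : (Fin d → ℝ) → ℝ} {ι : Type*} {l : Filter ι}

section Coordinate

variable {D : (Fin d → ℝ) → ℝ} {k : Fin d}

theorem abs_deriv_mul_le (hC : IsCopula d C)
    (hDderiv : ∀ u ∈ cube d, u k ∈ Ioo (0:ℝ) 1 →
      HasDerivWithinAt (fun s => C (Function.update u k s)) (D u) (Icc (0:ℝ) 1) (u k))
    {g : ℝ → ℝ} (hg0 : g 0 = 0) (hg1 : g 1 = 0) {u : Fin d → ℝ} (hu : u ∈ cube d) :
    |D u * g (u k)| ≤ |g (u k)| := by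
  by_cases huk : u k ∈ Ioo (0:ℝ) 1
  · have hD := hC.hasDerivWithinAt_mem_Icc huk (hDderiv u hu huk)
    rw [abs_mul, abs_of_nonneg hD.1]
    exact mul_le_of_le_one_left (abs_nonneg _) hD.2
  · obtain h | h : u k = 0 ∨ u k = 1 := by
      simpa using (Icc_sdiff_Ioo_same zero_le_one).subset ⟨hu k (mem_univ k), huk⟩
    all_goals simp [h, hg0, hg1]

theorem exists_abs_update_add_mul_sub_le (hC : IsCopula d C)
    (hDderiv : ∀ u ∈ cube d, u k ∈ Ioo (0:ℝ) 1 →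
      HasDerivWithinAt (fun s => C (Function.update u k s)) (D u) (Icc (0:ℝ) 1) (u k))
    (hDcont : ContinuousOn D {u | u ∈ cube d ∧ u k ∈ Ioo (0:ℝ) 1})
    {g : ℝ → ℝ} (hg : ContinuousOn g (Icc 0 1)) (hg0 : g 0 = 0) (hg1 : g 1 = 0)
    {ε : ℝ} (hε : 0 < ε) :
    ∃ ρ > 0, ∀ u ∈ cube d, ∀ w ∈ cube d, (∀ i, |w i - u i| ≤ ρ) → ∀ τ, |τ| ≤ ρ →
      |C (Function.update w k (u k + τ * g (u k))) - C (Function.update w k (u k))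
        - τ * (D u * g (u k))| ≤ |τ| * ε := by
  obtain ⟨M, hM⟩ := isCompact_Icc.exists_bound_of_continuousOn hg
  have hM0 : 0 ≤ M := (norm_nonneg _).trans (hM 0 (left_mem_Icc.2 zero_le_one))
  obtain ⟨δ, hδ, hgδ⟩ := exists_abs_le_of_near_endpoints hg hg0 hg1 (ε := ε / 2) (by positivity)
  obtain ⟨ρ, hρ, hCρ⟩ := exists_abs_update_sub_sub_mul_le hDderiv hDcont
    (ε := ε / (M + 1)) (by positivity) hδ
  refine ⟨ρ / (M + 1), by positivity, fun u hu w hw hwu τ hτ => ?_⟩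
  have hukI : u k ∈ Icc (0:ℝ) 1 := hu k (mem_univ k)
  have hgM : |g (u k)| ≤ M := by simpa using hM _ hukI
  by_cases hint : u k ∈ Icc δ (1 - δ)
  · have hτg : |τ * g (u k)| ≤ ρ := by
      rw [abs_mul]
      calc |τ| * |g (u k)| ≤ ρ / (M + 1) * (M + 1) := by gcongr; linarith
        _ = ρ := div_mul_cancel₀ _ (by positivity)
    have hρM : ρ / (M + 1) ≤ ρ := div_le_self hρ.le (by linarith)
    have h := hCρ u hu hint w hw (fun i => (hwu i).trans hρM) _ (by rwa [add_sub_cancel_left])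
    rw [add_sub_cancel_left, abs_mul] at h
    calc _ = |C (Function.update w k (u k + τ * g (u k))) - C (Function.update w k (u k))
            - τ * g (u k) * D u| := by ring_nf
      _ ≤ ε / (M + 1) * (|τ| * |g (u k)|) := h
      _ ≤ |τ| * ε := by
          rw [div_mul_eq_mul_div, div_le_iff₀ (by positivity)]
          nlinarith [abs_nonneg τ, mul_le_mul_of_nonneg_left hgM (abs_nonneg τ)]
  · have hg2 := hgδ (u k) hukI hint
    calc _ ≤ |C (Function.update w k (u k + τ * g (u k))) - C (Function.update w k (u k))|
            + |τ| * |D u * g (u k)| := by rw [← abs_mul]; exact abs_sub _ _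
      _ ≤ |τ| * |g (u k)| + |τ| * |g (u k)| := by
          refine add_le_add ?_ (mul_le_mul_of_nonneg_left ?_ (abs_nonneg _))
          · simpa [abs_mul] using hC.abs_update_sub_update_le w k (u k + τ * g (u k)) (u k)
          · exact hC.abs_deriv_mul_le hDderiv hg0 hg1 hu
      _ ≤ |τ| * ε := by nlinarith [abs_nonneg τ]

theorem exists_eventually_abs_update_sub_sub_le (hC : IsCopula d C)
    (hDderiv : ∀ u ∈ cube d, u k ∈ Ioo (0:ℝ) 1 →
      HasDerivWithinAt (fun s => C (Function.update u k s)) (D u) (Icc (0:ℝ) 1) (u k))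
    (hDcont : ContinuousOn D {u | u ∈ cube d ∧ u k ∈ Ioo (0:ℝ) 1})
    {t : ι → ℝ} (ht0 : ∀ n, t n ≠ 0) (htt : Tendsto t l (𝓝 0))
    {g : ℝ → ℝ} (hg : ContinuousOn g (Icc 0 1)) (hg0 : g 0 = 0) (hg1 : g 1 = 0)
    {φ : ι → (Fin d → ℝ) → ℝ}
    (hφ : TendstoUniformlyOn (fun n u => (φ n u - u k) / t n) (fun u => g (u k)) l (cube d))
    {ε : ℝ} (hε : 0 < ε) :
    ∃ ρ > 0, ∀ᶠ n in l, ∀ u ∈ cube d, ∀ w ∈ cube d, (∀ i, |w i - u i| ≤ ρ) →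
      |C (Function.update w k (φ n u)) - C (Function.update w k (u k)) - t n * (D u * g (u k))|
        ≤ |t n| * ε := by
  obtain ⟨ρ, hρ, hCρ⟩ := hC.exists_abs_update_add_mul_sub_le hDderiv hDcont hg hg0 hg1
    (ε := ε / 2) (by positivity)
  refine ⟨ρ, hρ, ?_⟩
  have htρ : ∀ᶠ n in l, |t n| ≤ ρ := by
    simpa using htt.abs.eventually (ge_mem_nhds (by simpa using hρ))
  filter_upwards [Metric.tendstoUniformlyOn_iff.1 hφ (ε / 2) (by positivity), htρ]
    with n hn htn u hu w hw hwu
  have hφ : |C (Function.update w k (φ n u)) - C (Function.update w k (u k + t n * g (u k)))|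
      ≤ |t n| * (ε / 2) := by
    refine (hC.abs_update_sub_update_le w k _ _).trans ?_
    have hdiv := (hn u hu).le
    rwa [Real.dist_eq, abs_sub_comm, ← mul_le_mul_iff_of_pos_left (abs_pos.2 (ht0 n)),
      ← abs_mul, mul_sub, mul_div_cancel₀ _ (ht0 n), sub_sub] at hdiv
  calc _ = |(C (Function.update w k (φ n u)) - C (Function.update w k (u k + t n * g (u k))))
        + (C (Function.update w k (u k + t n * g (u k))) - C (Function.update w k (u k))
          - t n * (D u * g (u k)))| := by ring_nf
    _ ≤ |t n| * (ε / 2) + |t n| * (ε / 2) :=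
        (abs_add_le _ _).trans (add_le_add hφ (hCρ u hu w hw hwu _ htn))
    _ = |t n| * ε := by ring

end Coordinate

theorem tendstoUniformlyOn_sub_div (hC : IsCopula d C) {D : Fin d → (Fin d → ℝ) → ℝ}
    (hDderiv : ∀ p : Fin d, ∀ u ∈ cube d, u p ∈ Ioo (0:ℝ) 1 →
      HasDerivWithinAt (fun s => C (Function.update u p s)) (D p u) (Icc (0:ℝ) 1) (u p))
    (hDcont : ∀ p : Fin d, ContinuousOn (D p) {u | u ∈ cube d ∧ u p ∈ Ioo (0:ℝ) 1})
    {t : ι → ℝ} (ht0 : ∀ n, t n ≠ 0) (htt : Tendsto t l (𝓝 0))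
    {g : Fin d → ℝ → ℝ} (hg : ∀ p, ContinuousOn (g p) (Icc 0 1)) (hg0 : ∀ p, g p 0 = 0)
    (hg1 : ∀ p, g p 1 = 0) {v : ι → (Fin d → ℝ) → Fin d → ℝ}
    (hv : ∀ n, ∀ u ∈ cube d, v n u ∈ cube d)
    (hvg : ∀ p, TendstoUniformlyOn (fun n u => (v n u p - u p) / t n) (fun u => g p (u p)) l
      (cube d)) :
    TendstoUniformlyOn (fun n u => (C (v n u) - C u) / t n) (fun u => ∑ p, D p u * g p (u p))
      l (cube d) := by
  rw [Metric.tendstoUniformlyOn_iff]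
  intro ε hε
  set ε' := ε / (d + 1)
  choose ρ hρ hCρ using fun k => hC.exists_eventually_abs_update_sub_sub_le (hDderiv k)
    (hDcont k) ht0 htt (hg k) (hg0 k) (hg1 k) (hvg k) (ε := ε') (by positivity)
  have hclose : ∀ k i, ∀ᶠ n in l, ∀ u ∈ cube d, |v n u i - u i| ≤ ρ k := fun k i => by
    obtain ⟨M, hM⟩ := isCompact_Icc.exists_bound_of_continuousOn (hg i)
    have := (hvg i).of_sub_div (fun u hu => by simpa using hM _ (hu i (mem_univ i))) ht0 htt
    filter_upwards [Metric.tendstoUniformlyOn_iff.1 this (ρ k) (hρ k)] with n hn u hu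
    simpa [Real.dist_eq, abs_sub_comm] using (hn u hu).le
  filter_upwards [eventually_all.2 hCρ, eventually_all.2 fun k => eventually_all.2 (hclose k)]
    with n hn hcl u hu
  have hterm : ∀ k : Fin d,
      |C (Function.update (fun i => if i < k then v n u i else u i) k (v n u k)) -
        C (Function.update (fun i => if i < k then v n u i else u i) k (u k)) -
          t n * (D k u * g k (u k))| ≤ |t n| * ε' := fun k => by
    refine hn k u hu _ (fun i _ => ?_) (fun i => ?_)
    · split_ifs
      · exact hv n u hu i (mem_univ i)
      · exact hu i (mem_univ i)
    · split_ifs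
      · exact hcl k i u hu
      · simpa using (hρ k).le
  rw [sub_eq_sum_update_sub C u (v n u), Real.dist_eq, abs_sub_comm]
  calc _ ≤ (Finset.univ : Finset (Fin d)).card * ε' :=
        abs_sum_div_sub_sum_le _ (ht0 n) fun k _ => hterm k
    _ < ε := by
        rw [Finset.card_univ, Fintype.card_fin, mul_div_assoc', div_lt_iff₀ (by positivity)]
        nlinarith

theorem tendstoUniformlyOn_genInv_margin_sub_div (hC : IsCopula d C) (p : Fin d) {t : ι → ℝ}
    (ht0 : ∀ n, t n ≠ 0) (htt : Tendsto t l (𝓝 0)) {a : ι → ℝ → ℝ} {b : ℝ → ℝ}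
    (hb : ContinuousOn b (Icc 0 1)) (hab : TendstoUniformlyOn a b l (Icc 0 1))
    (hG0 : ∀ n, C (margVec p 0) + t n * a n 0 = 0) (hG1 : ∀ n, C (margVec p 1) + t n * a n 1 = 1) :
    TendstoUniformlyOn (fun n q => (genInv (fun x => C (margVec p x) + t n * a n x) q - q) / t n)
      (fun q => -b q) l (Icc 0 1) := by
  refine tendstoUniformlyOn_genInv_sub_div ht0 htt hG0 hG1 hb
    (hab.congr (Eventually.of_forall fun n x hx => ?_))
  simp only [hC.apply_margVec p hx, add_sub_cancel_left, mul_div_cancel_left₀ _ (ht0 n)]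

end IsCopula

theorem tendstoUniformlyOn_Gamma_sub_div {ι : Type*} {l : Filter ι} {d : ℕ} {C L : (Fin d → ℝ) → ℝ}
    {v : ι → (Fin d → ℝ) → Fin d → ℝ} {t : ι → ℝ} (ht0 : ∀ n, t n ≠ 0)
    {α : ℝ → (Fin d → ℝ) → ℝ} {αn : ι → ℝ → (Fin d → ℝ) → ℝ}
    (hA : TendstoUniformlyOn (fun n u => (C (v n u) - C u) / t n) L l (cube d))
    (hB : TendstoUniformlyOn (fun n q => αn n q.1 (v n q.2)) (fun q => α q.1 q.2) l
      (Icc 0 1 ×ˢ cube d)) :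
    TendstoUniformlyOn (fun n (q : ℝ × (Fin d → ℝ)) =>
      (q.1 * C (v n q.2) + t n * αn n q.1 (v n q.2) - q.1 * C q.2) / t n)
      (fun q => α q.1 q.2 + q.1 * L q.2) l (Icc 0 1 ×ˢ cube d) := by
  refine ((((hA.comp Prod.snd).mono fun q hq => hq.2).mul_left_of_abs_le (c := Prod.fst) (M := 1)
    fun q hq => abs_le.2 ⟨by linarith [hq.1.1], hq.1.2⟩).add hB).congr ?_ |>.congr_right
      fun q _ => add_comm _ _
  filter_upwards with n q _
  simp only [Function.comp_apply, Pi.add_apply]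
  field_simp [ht0 n]
  ring

theorem IsCopula.tendsto_iSup_abs_Gamma_sub_div {ι : Type*} {l : Filter ι} {d : ℕ}
    {C : (Fin d → ℝ) → ℝ} (hC : IsCopula d C) {D : Fin d → (Fin d → ℝ) → ℝ}
    (hDderiv : ∀ p : Fin d, ∀ u ∈ cube d, u p ∈ Ioo (0:ℝ) 1 →
      HasDerivWithinAt (fun s => C (Function.update u p s)) (D p u) (Icc (0:ℝ) 1) (u p))
    (hDcont : ∀ p : Fin d, ContinuousOn (D p) {u | u ∈ cube d ∧ u p ∈ Ioo (0:ℝ) 1})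
    {t : ι → ℝ} (ht0 : ∀ n, t n ≠ 0) (htt : Tendsto t l (𝓝 0))
    {α : ℝ → (Fin d → ℝ) → ℝ} {αn : ι → ℝ → (Fin d → ℝ) → ℝ}
    (hunif : TendstoUniformlyOn (fun n q => αn n q.1 q.2) (fun q => α q.1 q.2) l
      (Icc (0:ℝ) 1 ×ˢ cube d))
    (hαcont : ContinuousOn (fun q : ℝ × (Fin d → ℝ) => α q.1 q.2) (Icc (0:ℝ) 1 ×ˢ cube d))
    {g : Fin d → ℝ → ℝ} (hg : ∀ p, ContinuousOn (g p) (Icc 0 1)) (hg0 : ∀ p, g p 0 = 0)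
    (hg1 : ∀ p, g p 1 = 0) {F : ι → Fin d → ℝ → ℝ} (hF : ∀ n p, MapsTo (F n p) (Icc 0 1) (Icc 0 1))
    (hFg : ∀ p, TendstoUniformlyOn (fun n q => (F n p q - q) / t n) (fun q => -g p q) l
      (Icc 0 1)) :
    Tendsto (fun n => ⨆ q : (Icc (0:ℝ) 1 ×ˢ cube d : Set (ℝ × (Fin d → ℝ))),
      |((q.1.1 * C (fun p => F n p (q.1.2 p)) + t n * αn n q.1.1 (fun p => F n p (q.1.2 p))
          - q.1.1 * C q.1.2) / t n)
        - (α q.1.1 q.1.2 - q.1.1 * ∑ p, D p q.1.2 * g p (q.1.2 p))|) l (𝓝 0) := by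
  have hv : ∀ n, ∀ u ∈ cube d, (fun p => F n p (u p)) ∈ cube d := fun n u hu p _ =>
    hF n p (hu p (mem_univ p))
  have hvg : ∀ p, TendstoUniformlyOn (fun n (u : Fin d → ℝ) => (F n p (u p) - u p) / t n)
      (fun u => -g p (u p)) l (cube d) := fun p =>
    ((hFg p).comp fun u : Fin d → ℝ => u p).mono fun u hu => hu p (mem_univ p)
  have hA := hC.tendstoUniformlyOn_sub_div hDderiv hDcont ht0 htt (g := fun p x => -g p x)
    (fun p => (hg p).neg) (by simp [hg0]) (by simp [hg1]) hv hvg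
  have hvu : ∀ p, TendstoUniformlyOn (fun n (u : Fin d → ℝ) => F n p (u p)) (fun u => u p)
      l (cube d) := fun p => by
    obtain ⟨M, hM⟩ := isCompact_Icc.exists_bound_of_continuousOn (hg p)
    exact (hvg p).of_sub_div (fun u hu => by simpa using hM _ (hu p (mem_univ p))) ht0 htt
  have hB := hunif.comp_of_uniformContinuousOn ((isCompact_Icc.prod (isCompact_univ_pi fun _ =>
    isCompact_Icc)).uniformContinuousOn_of_continuous hαcont)
    (tendstoUniformlyOn_prodMk_pi hvu)
    (fun n q hq => ⟨hq.1, hv n _ hq.2⟩) fun q hq => hq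
  have hE := (tendstoUniformlyOn_Gamma_sub_div ht0 hA hB).congr_right
    (g := fun q => α q.1 q.2 - q.1 * ∑ p, D p q.2 * g p (q.2 p)) fun q _ => by
      simp only [mul_neg, Finset.sum_neg_distrib]
      ring
  have hne : (Icc (0:ℝ) 1 ×ˢ cube d).Nonempty :=
    ⟨(0, fun _ => 0), left_mem_Icc.2 zero_le_one, fun _ _ => left_mem_Icc.2 zero_le_one⟩
  have h := tendsto_iSup_abs_sub_of_tendstoUniformlyOn hne hE
  beta_reduce at h
  exact h

theorem Gamma_hadamard_differentiable_at_Csharp_general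
    (d : ℕ) (C : (Fin d → ℝ) → ℝ) (hC : IsCopula d C)
    (D : Fin d → (Fin d → ℝ) → ℝ)
    (hDderiv : ∀ p : Fin d, ∀ u ∈ cube d, u p ∈ Ioo (0:ℝ) 1 →
      HasDerivWithinAt (fun s => C (Function.update u p s)) (D p u) (Icc (0:ℝ) 1) (u p))
    (hDcont : ∀ p : Fin d, ContinuousOn (D p) {u | u ∈ cube d ∧ u p ∈ Ioo (0:ℝ) 1})
    (t : ℕ → ℝ) (ht0 : ∀ n, t n ≠ 0) (htt : Tendsto t atTop (nhds 0))
    (α : ℝ → (Fin d → ℝ) → ℝ) (αn : ℕ → ℝ → (Fin d → ℝ) → ℝ)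
    (hunif : TendstoUniformlyOn (fun n q => αn n q.1 q.2) (fun q => α q.1 q.2) atTop
      (Icc (0:ℝ) 1 ×ˢ cube d))
    -- `α^# ∈ D₀^#`:
    (hαcont : ContinuousOn (fun q : ℝ × (Fin d → ℝ) => α q.1 q.2) (Icc (0:ℝ) 1 ×ˢ cube d))
    (hαD0 : ∀ s ∈ Ioc (0:ℝ) 1, α s (fun _ => 1) = 0 ∧ ∀ u, (∃ p, u p = 0) → α s u = 0)
    -- `H = C + tₙαₙ^#(1,·)` is a distribution function on `[0,1]^d` with marginals
    -- vanishing at `0`: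
    (hdom : ∀ n, ∃ ν : Measure (Fin d → ℝ), IsProbabilityMeasure ν ∧
      (∀ p : Fin d, ν {x | x p ≤ 0} = 0 ∧ ν {x | 1 < x p} = 0) ∧
      (∀ u ∈ cube d, C u + t n * αn n 1 u = (ν {x | ∀ p, x p ≤ u p}).toReal))
    -- generalized inverses of the marginals of `H`:
    (Finv : ℕ → Fin d → ℝ → ℝ)
    (hFinv : ∀ n (p : Fin d), ∀ q ∈ Ioc (0:ℝ) 1,
      Finv n p q = sInf {x ∈ Icc (0:ℝ) 1 |
        q ≤ C (margVec p x) + t n * αn n 1 (margVec p x)})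
    (hFinv0 : ∀ n (p : Fin d), Finv n p 0 = sSup {x ∈ Icc (0:ℝ) 1 |
        C (margVec p x) + t n * αn n 1 (margVec p x) = 0}) :
    Tendsto (fun n => ⨆ q : (Icc (0:ℝ) 1 ×ˢ cube d : Set (ℝ × (Fin d → ℝ))),
      |((q.1.1 * C (fun p => Finv n p (q.1.2 p))
            + t n * αn n q.1.1 (fun p => Finv n p (q.1.2 p))
          - q.1.1 * C q.1.2) / t n)
        - (α q.1.1 q.1.2 - q.1.1 * ∑ p, D p q.1.2 * α 1 (margVec p (q.1.2 p)))|)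
      atTop (nhds 0) := by
  have hα1 := hαD0 1 ⟨one_pos, le_rfl⟩
  have hmarg : ∀ p : Fin d, MapsTo (fun x => ((1:ℝ), margVec p x)) (Icc 0 1) (Icc 0 1 ×ˢ cube d) :=
    fun p x hx => ⟨right_mem_Icc.2 zero_le_one, margVec_mem_cube p hx⟩
  have hg : ∀ p : Fin d, ContinuousOn (fun x => α 1 (margVec p x)) (Icc 0 1) := fun p =>
    hαcont.comp (by unfold margVec; fun_prop) (hmarg p)
  have hG := fun n => apply_margVec_zero_one_of_measure (hdom n)
  have hFinvEq := fun n p => eqOn_genInv (hFinv n p) (hFinv0 n p)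
  refine hC.tendsto_iSup_abs_Gamma_sub_div hDderiv hDcont ht0 htt hunif hαcont hg
    (fun p => hα1.2 _ ⟨p, by simp [margVec]⟩) (fun p => by simpa [margVec] using hα1.1)
    (fun n p q hq => ?_) fun p => ?_
  · rw [hFinvEq n p hq]
    exact genInv_mem_Icc (hG n p).1 (hG n p).2 hq
  · exact (hC.tendstoUniformlyOn_genInv_margin_sub_div p ht0 htt (hg p)
      ((hunif.comp _).mono (hmarg p)) (fun n => (hG n p).1) (fun n => (hG n p).2)).congr
      (Eventually.of_forall fun n q hq => by simp only [Function.comp_apply, hFinvEq n p hq])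

/-- Hadamard differentiability of `Γ(H^#)(s,u) = H^#(s,H⁻(u))` at `C^#`
tangentially to `D₀^#`: under Segers' condition on the copula `C`, for `tₙ → 0`
(`tₙ ≠ 0`) and bounded `αₙ^# → α^# ∈ D₀^#` uniformly with `C^# + tₙαₙ^#` in the domain,
`(Γ(C^# + tₙαₙ^#) − Γ(C^#))/tₙ` converges uniformly to
`(s,u) ↦ α^#(s,u) − s·Σ_p ∂_pC(u)·α^#(1,u^{(p)})`. -/
theorem Gamma_hadamard_differentiable_at_Csharp
    (d : ℕ) (C : (Fin d → ℝ) → ℝ) (hC : IsCopula d C)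
    (D : Fin d → (Fin d → ℝ) → ℝ)
    (hDderiv : ∀ p : Fin d, ∀ u ∈ cube d, u p ∈ Ioo (0:ℝ) 1 →
      HasDerivWithinAt (fun s => C (Function.update u p s)) (D p u) (Icc (0:ℝ) 1) (u p))
    (hDcont : ∀ p : Fin d, ContinuousOn (D p) {u | u ∈ cube d ∧ u p ∈ Ioo (0:ℝ) 1})
    (hDbdry : ∀ p : Fin d, ∀ u, (u p = 0 ∨ u p = 1) → D p u = 0)
    (t : ℕ → ℝ) (ht0 : ∀ n, t n ≠ 0) (htt : Tendsto t atTop (nhds 0))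
    (α : ℝ → (Fin d → ℝ) → ℝ) (αn : ℕ → ℝ → (Fin d → ℝ) → ℝ)
    (hbdd : ∀ n, ∃ M, ∀ s ∈ Icc (0:ℝ) 1, ∀ u ∈ cube d, |αn n s u| ≤ M)
    (hunif : TendstoUniformlyOn (fun n q => αn n q.1 q.2) (fun q => α q.1 q.2) atTop
      (Icc (0:ℝ) 1 ×ˢ cube d))
    -- `α^# ∈ D₀^#`:
    (hαcont : ContinuousOn (fun q : ℝ × (Fin d → ℝ) => α q.1 q.2) (Icc (0:ℝ) 1 ×ˢ cube d))
    (hα0 : ∀ u, α 0 u = 0)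
    (hαD0 : ∀ s ∈ Ioc (0:ℝ) 1, α s (fun _ => 1) = 0 ∧ ∀ u, (∃ p, u p = 0) → α s u = 0)
    -- `H = C + tₙαₙ^#(1,·)` is a distribution function on `[0,1]^d` with marginals
    -- vanishing at `0`:
    (hdom : ∀ n, ∃ ν : Measure (Fin d → ℝ), IsProbabilityMeasure ν ∧
      (∀ p : Fin d, ν {x | x p ≤ 0} = 0 ∧ ν {x | 1 < x p} = 0) ∧
      (∀ u ∈ cube d, C u + t n * αn n 1 u = (ν {x | ∀ p, x p ≤ u p}).toReal))
    -- generalized inverses of the marginals of `H`: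
    (Finv : ℕ → Fin d → ℝ → ℝ)
    (hFinv : ∀ n (p : Fin d), ∀ q ∈ Ioc (0:ℝ) 1,
      Finv n p q = sInf {x ∈ Icc (0:ℝ) 1 |
        q ≤ C (margVec p x) + t n * αn n 1 (margVec p x)})
    (hFinv0 : ∀ n (p : Fin d), Finv n p 0 = sSup {x ∈ Icc (0:ℝ) 1 |
        C (margVec p x) + t n * αn n 1 (margVec p x) = 0}) :
    Tendsto (fun n => ⨆ q : (Icc (0:ℝ) 1 ×ˢ cube d : Set (ℝ × (Fin d → ℝ))),
      |((q.1.1 * C (fun p => Finv n p (q.1.2 p))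
            + t n * αn n q.1.1 (fun p => Finv n p (q.1.2 p))
          - q.1.1 * C q.1.2) / t n)
        - (α q.1.1 q.1.2 - q.1.1 * ∑ p, D p q.1.2 * α 1 (margVec p (q.1.2 p)))|)
      atTop (nhds 0) :=
  Gamma_hadamard_differentiable_at_Csharp_general d C hC D hDderiv hDcont t ht0 htt α αn hunif
    hαcont hαD0 hdom Finv hFinv hFinv0
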